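/- Summability of the Voronoi-cell interaction. Let A = {0,1} and d = 2. For ω ∈ A^{Z²} set C(ω) = {i ∈ Z² : ω(i) = 1}, and for i ∈ C(ω) let Vor_i(ω) = {y ∈ R² : ‖i−y‖₂ ≤ ‖k−y‖₂ for all k ∈ C(ω), k ≠ i} be the Voronoi cell of i (Vor_i(ω) = R² if C(ω) = {i}). Let Φ be a bounded real-valued function on subsets of R² such that |Φ(B)| ≤ C/diam(B)^{2+ε} for all B ⊂ R², for some constants C > 0 and ε > 0, and set K^j(ω) = Φ(Vor_j(ω)) for j ∈ C(ω) and K^j(ω) = 0 otherwise. Then sup_{i∈Z²} sup_{ω∈A^{Z²}} Σ_{j ∈ C(ω) : i ∈ Vor_j(ω)} |K^j(ω)| < ∞. -/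

import Mathlib

open scoped ENNReal NNReal

namespace VoronoiInteraction

/-- The standard embedding of `ℤ²` into the Euclidean plane. -/
noncomputable def emb (i : ℤ × ℤ) : EuclideanSpace ℝ (Fin 2) :=
  (WithLp.equiv 2 (Fin 2 → ℝ)).symm ![(i.1 : ℝ), (i.2 : ℝ)]

/-- The set `C(ω)` of occupied sites of the configuration `ω`. -/
def occ (ω : ℤ × ℤ → Bool) : Set (ℤ × ℤ) := {i | ω i = true}

/-- The Voronoi cell of the site `j` in the configuration `ω`: the set of points of the
plane at least as close to `j` as to every other occupied site. -/
noncomputable def Vor (ω : ℤ × ℤ → Bool) (j : ℤ × ℤ) : Set (EuclideanSpace ℝ (Fin 2)) :=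
  {y | ∀ k ∈ occ ω, k ≠ j → dist (emb j) y ≤ dist (emb k) y}

/-- The Voronoi-cell interaction `K^j(ω) = Φ(Vor_j(ω))` for occupied `j`, `0` otherwise. -/
noncomputable def K (Φ : Set (EuclideanSpace ℝ (Fin 2)) → ℝ) (ω : ℤ × ℤ → Bool)
    (j : ℤ × ℤ) : ℝ :=
  if ω j = true then Φ (Vor ω j) else 0


/-! The cell of `j` contains the closed ball of radius `1/2` about `j` (distinct lattice points are
at distance at least `1`) as well as `j` itself, so whenever it contains `i` we get
`diam Vor_j(ω) ≥ max 1 ‖j - i‖`. The decay of `Φ` then bounds the sum over `j`, uniformly in `i`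
and `ω`, by the lattice sum `C ∑_{v ∈ ℤ²} max 1 ‖v‖ ^ (-(2 + ε))`, which converges because
`2 + ε > 2`. -/

lemma norm_sub_le_dist_emb (i j : ℤ × ℤ) : ‖i - j‖ ≤ dist (emb i) (emb j) := by
  have h0 := PiLp.dist_apply_le (emb i) (emb j) 0
  have h1 := PiLp.dist_apply_le (emb i) (emb j) 1
  simp only [emb, WithLp.equiv_symm_apply, Real.dist_eq, Matrix.cons_val_zero,
    Matrix.cons_val_one, Matrix.cons_val_fin_one] at h0 h1
  rw [Prod.norm_def, Prod.fst_sub, Prod.snd_sub, Int.norm_eq_abs, Int.norm_eq_abs]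
  push_cast
  exact max_le h0 h1

lemma one_le_norm_of_ne_zero {v : ℤ × ℤ} (hv : v ≠ 0) : 1 ≤ ‖v‖ := by
  obtain ⟨a, b⟩ := v
  rw [Prod.norm_def, Int.norm_eq_abs, Int.norm_eq_abs]
  by_cases ha : a = 0
  · have hb : b ≠ 0 := by rintro rfl; exact hv (by simp [ha])
    exact le_max_of_le_right (by exact_mod_cast Int.one_le_abs hb)
  · exact le_max_of_le_left (by exact_mod_cast Int.one_le_abs ha)

lemma one_le_dist_emb {j k : ℤ × ℤ} (h : j ≠ k) : 1 ≤ dist (emb j) (emb k) :=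
  (one_le_norm_of_ne_zero (sub_ne_zero.2 h)).trans (norm_sub_le_dist_emb j k)

lemma emb_mem_Vor (ω : ℤ × ℤ → Bool) (j : ℤ × ℤ) : emb j ∈ Vor ω j := fun _ _ _ => by
  simp only [dist_self, dist_nonneg]

lemma closedBall_subset_Vor (ω : ℤ × ℤ → Bool) (j : ℤ × ℤ) :
    Metric.closedBall (emb j) (1 / 2) ⊆ Vor ω j := by
  intro y hy k _ hkj
  rw [Metric.mem_closedBall, dist_comm] at hy
  have hsep := one_le_dist_emb hkj
  have htri := dist_triangle (emb k) y (emb j)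
  rw [dist_comm y] at htri
  linarith

lemma one_le_ediam_Vor (ω : ℤ × ℤ → Bool) (j : ℤ × ℤ) : 1 ≤ Metric.ediam (Vor ω j) :=
  calc (1 : ℝ≥0∞) = ENNReal.ofReal (Metric.diam (Metric.closedBall (emb j) (1 / 2))) := by
        rw [Metric.diam_closedBall_eq _ (by norm_num)]; norm_num
    _ ≤ Metric.ediam (Metric.closedBall (emb j) (1 / 2)) := ENNReal.ofReal_toReal_le
    _ ≤ Metric.ediam (Vor ω j) := Metric.ediam_mono (closedBall_subset_Vor ω j)

lemma max_one_nnnorm_sub_le_ediam_Vor {ω : ℤ × ℤ → Bool} {i j : ℤ × ℤ}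
    (hi : emb i ∈ Vor ω j) : (max 1 ‖j - i‖₊ : ℝ≥0) ≤ Metric.ediam (Vor ω j) := by
  rw [ENNReal.coe_max, ENNReal.coe_one]
  refine max_le (one_le_ediam_Vor ω j) ?_
  calc (‖j - i‖₊ : ℝ≥0∞) ≤ edist (emb j) (emb i) := by
        rw [edist_dist, ← ENNReal.ofReal_coe_nnreal, coe_nnnorm]
        exact ENNReal.ofReal_le_ofReal (norm_sub_le_dist_emb j i)
    _ ≤ Metric.ediam (Vor ω j) := Metric.edist_le_ediam_of_mem (emb_mem_Vor ω j) hi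

lemma nnnorm_K_le {Φ : Set (EuclideanSpace ℝ (Fin 2)) → ℝ} {C : ℝ≥0} {p : ℝ} (hp : 0 ≤ p)
    (hdecay : ∀ B, (‖Φ B‖₊ : ℝ≥0∞) ≤ C / Metric.ediam B ^ p)
    {ω : ℤ × ℤ → Bool} {i j : ℤ × ℤ} (hj : j ∈ occ ω) (hi : emb i ∈ Vor ω j) :
    (‖K Φ ω j‖₊ : ℝ≥0∞) ≤ C / ((max 1 ‖j - i‖₊ : ℝ≥0) : ℝ≥0∞) ^ p := by
  rw [K, if_pos (show ω j = true from hj)]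
  exact (hdecay _).trans <|
    ENNReal.div_le_div_left (ENNReal.rpow_le_rpow (max_one_nnnorm_sub_le_ediam_Vor hi) hp) _

lemma summable_max_one_norm_rpow_neg {p : ℝ} (hp : 2 < p) :
    Summable fun v : ℤ × ℤ => max 1 ‖v‖ ^ (-p) := by
  have hlattice : Summable fun v : ℤ × ℤ => ‖v‖ ^ (-p) := by
    refine (finTwoArrowEquiv ℤ).summable_iff.1 ?_
    simpa [Function.comp_def, EisensteinSeries.norm_eq_max_natAbs, Prod.norm_def,
      Int.norm_eq_abs] using EisensteinSeries.summable_one_div_norm_rpow hp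
  refine hlattice.of_norm_bounded_eventually ?_
  filter_upwards [(Set.finite_singleton (0 : ℤ × ℤ)).compl_mem_cofinite] with v hv
  rw [max_eq_right (one_le_norm_of_ne_zero hv), Real.norm_of_nonneg (by positivity)]

lemma tsum_div_max_one_nnnorm_rpow_lt_top (C : ℝ≥0) {p : ℝ} (hp : 2 < p) :
    ∑' v : ℤ × ℤ, (C : ℝ≥0∞) / ((max 1 ‖v‖₊ : ℝ≥0) : ℝ≥0∞) ^ p < ⊤ := by
  have hcoe : ∀ v : ℤ × ℤ, (C : ℝ≥0∞) / ((max 1 ‖v‖₊ : ℝ≥0) : ℝ≥0∞) ^ p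
      = ((C * max 1 ‖v‖₊ ^ (-p) : ℝ≥0) : ℝ≥0∞) := fun v => by
    have hv : max 1 ‖v‖₊ ≠ 0 := (lt_max_of_lt_left one_pos).ne'
    rw [ENNReal.coe_mul, ENNReal.coe_rpow_of_ne_zero hv, ENNReal.rpow_neg, div_eq_mul_inv]
  simp_rw [hcoe]
  refine lt_top_iff_ne_top.2 (ENNReal.tsum_coe_ne_top_iff_summable.2 ?_)
  rw [← NNReal.summable_coe]
  simpa using (summable_max_one_norm_rpow_neg hp).mul_left (C : ℝ)

theorem voronoi_interaction_summable_general (Φ : Set (EuclideanSpace ℝ (Fin 2)) → ℝ)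
    (C : ℝ≥0) (ε : ℝ) (hε : 0 < ε)
    (hdecay : ∀ B : Set (EuclideanSpace ℝ (Fin 2)),
      (‖Φ B‖₊ : ℝ≥0∞) ≤ (C : ℝ≥0∞) / EMetric.diam B ^ ((2 : ℝ) + ε)) :
    (⨆ (i : ℤ × ℤ) (ω : ℤ × ℤ → Bool),
      ∑' j : {j : ℤ × ℤ // j ∈ occ ω ∧ emb i ∈ Vor ω j}, (‖K Φ ω j.1‖₊ : ℝ≥0∞)) < ⊤ := by
  set bound : ℤ × ℤ → ℝ≥0∞ := fun v => C / ((max 1 ‖v‖₊ : ℝ≥0) : ℝ≥0∞) ^ ((2 : ℝ) + ε)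
  refine (iSup₂_le fun i ω => ?_).trans_lt
    (tsum_div_max_one_nnnorm_rpow_lt_top C (p := 2 + ε) (by linarith))
  calc ∑' j : {j : ℤ × ℤ // j ∈ occ ω ∧ emb i ∈ Vor ω j}, (‖K Φ ω j.1‖₊ : ℝ≥0∞)
      ≤ ∑' j : {j : ℤ × ℤ // j ∈ occ ω ∧ emb i ∈ Vor ω j}, bound (j.1 - i) :=
        ENNReal.tsum_le_tsum fun j => nnnorm_K_le (by positivity) hdecay j.2.1 j.2.2
    _ ≤ ∑' j : ℤ × ℤ, bound (j - i) :=
        ENNReal.tsum_comp_le_tsum_of_injective Subtype.val_injective _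
    _ = ∑' v : ℤ × ℤ, bound v := (Equiv.subRight i).tsum_eq bound

/-- **Summability of the Voronoi-cell interaction.** If `Φ` is bounded and satisfies
`|Φ(B)| ≤ C / diam(B)^{2+ε}` (with the convention that the right-hand side vanishes for
sets of infinite diameter), then
`sup_{i ∈ ℤ²} sup_ω Σ_{j ∈ C(ω) : i ∈ Vor_j(ω)} |K^j(ω)| < ∞`. -/
theorem voronoi_interaction_summable (Φ : Set (EuclideanSpace ℝ (Fin 2)) → ℝ)
    (C : ℝ≥0) (ε : ℝ) (hε : 0 < ε)
    (hbd : ∃ M : ℝ, ∀ B : Set (EuclideanSpace ℝ (Fin 2)), |Φ B| ≤ M)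
    (hdecay : ∀ B : Set (EuclideanSpace ℝ (Fin 2)),
      (‖Φ B‖₊ : ℝ≥0∞) ≤ (C : ℝ≥0∞) / EMetric.diam B ^ ((2 : ℝ) + ε)) :
    (⨆ (i : ℤ × ℤ) (ω : ℤ × ℤ → Bool),
      ∑' j : {j : ℤ × ℤ // j ∈ occ ω ∧ emb i ∈ Vor ω j}, (‖K Φ ω j.1‖₊ : ℝ≥0∞)) < ⊤ :=
  voronoi_interaction_summable_general Φ C ε hε hdecay

end VoronoiInteraction
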